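/- Let μ be an elliptic, non-degenerate, stationary ergodic probability measure over cookie environments. Then ℙ₀(T₋₁ = ∞) > 0 if and only if ℙ₀(A⁺) > 0, where A⁺ is the event lim_{n→∞} X_n = +∞. -/

import Mathlib

open Filter Set

/-- The number of `true`s (1's) appearing strictly before the `x`-th `false` (0)
in the binary sequence `b`; `Uplus b 0 = 0`. -/
noncomputable def Uplus (b : ℕ → Bool) (x : ℕ) : ℕ :=
  if x = 0 then 0
  else sInf {j : ℕ | ((Finset.range j).filter (fun i => b i = false)).card = x} - x

/-- The number of `false`s (0's) appearing strictly before the `x`-th `true` (1). -/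
noncomputable def Uminus (b : ℕ → Bool) (x : ℕ) : ℕ :=
  Uplus (fun i => !(b i)) x

/-- A binary sequence is non-degenerate if it has infinitely many 0's and
infinitely many 1's. -/
def NonDeg (b : ℕ → Bool) : Prop :=
  {i | b i = false}.Infinite ∧ {i | b i = true}.Infinite

/-- An arrow environment is non-degenerate if every column is non-degenerate. -/
def NonDegEnv (a : ℤ → ℕ → Bool) : Prop := ∀ x : ℤ, NonDeg (a x)

/-- The history (most recent position first) of the walk driven by the arrow
environment `a`, started at `0`: at its `k`-th visit (`k` counted from `0`)
to site `x` the walk moves right if `a x k = true` and left otherwise. -/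
def walkHist (a : ℤ → ℕ → Bool) : ℕ → List ℤ
  | 0 => [0]
  | t + 1 =>
    let h := walkHist a t
    let x := h.headI
    let k := h.countP (fun y => decide (y = x)) - 1
    (x + (if a x k then 1 else -1)) :: h

/-- The position at time `t` of the walk driven by `a`, started at `0`. -/
def walk (a : ℤ → ℕ → Bool) (t : ℕ) : ℤ := (walkHist a t).headI

/-- `Zplus a n y`: the forward process `Z⁺` with initial value `y`. -/
noncomputable def Zplus (a : ℤ → ℕ → Bool) : ℕ → ℕ → ℕ
  | 0, y => y
  | n + 1, y => Uplus (a (n : ℤ)) (Zplus a n y)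

/-- `Zminus a n y`: the backward process `Z⁻` with initial value `y`. -/
noncomputable def Zminus (a : ℤ → ℕ → Bool) : ℕ → ℕ → ℕ
  | 0, y => y
  | n + 1, y => Uminus (a (-(n : ℤ))) (Zminus a n y)

/-- `ZminusBack a l y = U⁻_{a 0} ∘ ⋯ ∘ U⁻_{a (l-1)} (y)`. -/
noncomputable def ZminusBack (a : ℤ → ℕ → Bool) (l y : ℕ) : ℕ :=
  (List.range l).foldr (fun i z => Uminus (a (i : ℤ)) z) y

open MeasureTheory
open scoped ENNReal


abbrev CookieSpace : Type := ℤ → ℕ → ℝ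
abbrev ArrowSpace : Type := ℤ → ℕ → Bool

/-- The `ℤ`-shift on cookie environments. -/
def shiftC (ω : CookieSpace) : CookieSpace := fun x => ω (x + 1)

/-- The `ℤ`-shift on arrow environments. -/
def shiftA (a : ArrowSpace) : ArrowSpace := fun x => a (x + 1)

/-- Shift of an arrow environment by `m` steps. -/
def shiftBy (m : ℤ) (a : ArrowSpace) : ArrowSpace := fun x => a (x + m)

/-- The arrow environment obtained from the cookie environment `ω` and the
source of uniform randomness `u`: `F(ω,u)(x,n) = 1_{u(x,n) < ω(x,n)}`. -/
noncomputable def arrows (ω u : CookieSpace) : ArrowSpace := fun x n => decide (u x n < ω x n)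

/-- `PU` is the product over `ℤ × ℕ` of i.i.d. uniform distributions on `[0,1]`,
characterized by its values on measurable cylinder sets. -/
def IsUniformProduct (PU : Measure CookieSpace) : Prop :=
  IsProbabilityMeasure PU ∧
    ∀ (S : Finset (ℤ × ℕ)) (B : ℤ × ℕ → Set ℝ), (∀ p, MeasurableSet (B p)) →
      PU {u | ∀ p ∈ S, u p.1 p.2 ∈ B p} = ∏ p ∈ S, volume (B p ∩ Set.Icc (0 : ℝ) 1)

/-- The annealed law of the arrow environment: sample `ω ~ μ` and `u ~ PU`
independently, and take the arrows `F(ω,u)`. -/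
noncomputable def annealed (μ PU : Measure CookieSpace) : Measure ArrowSpace :=
  (μ.prod PU).map (fun p => arrows p.1 p.2)

/-- `μ` is an elliptic measure over cookie environments. -/
def EllipticAE (μ : Measure CookieSpace) : Prop :=
  ∀ᵐ ω ∂μ, ∀ (x : ℤ) (n : ℕ), ω x n ∈ Set.Ioo (0 : ℝ) 1

/-- `μ` is a measure over cookie environments (cookies take values in `[0,1]`). -/
def CookieValued (μ : Measure CookieSpace) : Prop :=
  ∀ᵐ ω ∂μ, ∀ (x : ℤ) (n : ℕ), ω x n ∈ Set.Icc (0 : ℝ) 1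

/-!
If the walk never reaches `-1`, it stays in `[0, ∞)`; were it not transient to the right, some
site `x ≥ 0` would be visited infinitely often, and since every column contains infinitely many
left arrows, so would `x - 1`, `x - 2`, …, `-1`.

For the converse, let `crossBound c m k` iterate `y ↦ U⁻(c m, y) + 1` from `1`, reading the
columns at the sites `m + k, …, m + 1`. If `Xₙ → ∞`, the total numbers of right crossings of the
edges `{m, m + 1}` form a positive supersolution of this recursion, so the iterates at `m = 0`
are bounded by some `n`. If instead the walk is at `-1` at time `T`, the right crossings up to
`T` form a subsolution, so fewer than `n` right steps were made from `0`; this is impossible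
when the first `n` arrows at `0` point right, because a left step from `0` was also made. The
bound `n` is a function of the arrows at the sites `≥ 1`, which given the environment are
independent of the arrows at `0`; by ellipticity, forcing the first `n` arrows at `0` to the
right then keeps the probability positive.
-/

section Coins

variable (b : ℕ → Bool)

lemma count_true_add_count_false (j : ℕ) :
    Nat.count (b · = true) j + Nat.count (b · = false) j = j := by
  induction j with
  | zero => simp
  | succ j ih => cases h : b j <;> simp [Nat.count_succ, h] <;> omega

lemma exists_count_true_eq {b : ℕ → Bool} (hb : {i | b i = true}.Infinite) (u : ℕ) :
    ∃ j, Nat.count (b · = true) j = u :=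
  ⟨_, Nat.count_nth_of_infinite hb u⟩

lemma Uminus_eq_ite (u : ℕ) :
    Uminus b u = if u = 0 then 0 else sInf {j | Nat.count (b · = true) j = u} - u := by
  simp [Uminus, Uplus, Nat.count_eq_card_filter_range]

lemma Uminus_eq_count_false {u : ℕ} (hu : ∃ j, Nat.count (b · = true) j = u) :
    Uminus b u = Nat.count (b · = false) (sInf {j | Nat.count (b · = true) j = u}) := by
  have hmem : Nat.count (b · = true) (sInf {j | Nat.count (b · = true) j = u}) = u :=
    Nat.sInf_mem hu
  have hsum := count_true_add_count_false b (sInf {j | Nat.count (b · = true) j = u})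
  rw [Uminus_eq_ite]
  split_ifs with h0
  · have : sInf {j | Nat.count (b · = true) j = u} ≤ 0 :=
      Nat.sInf_le (by subst h0; exact Nat.count_zero _)
    omega
  · omega

lemma Uminus_le_count_false {j u : ℕ} (h : Nat.count (b · = true) j = u) :
    Uminus b u ≤ Nat.count (b · = false) j := by
  rw [Uminus_eq_count_false b ⟨j, h⟩]
  exact Nat.count_monotone _ (Nat.sInf_le h)

lemma count_false_le_Uminus {b : ℕ → Bool} (hb : {i | b i = true}.Infinite) {j u : ℕ}
    (h : Nat.count (b · = true) j < u) : Nat.count (b · = false) j ≤ Uminus b u := by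
  have hu := exists_count_true_eq hb u
  rw [Uminus_eq_count_false b hu]
  refine Nat.count_monotone _ (le_of_not_gt fun hlt => ?_)
  have := Nat.count_monotone (b · = true) hlt.le
  have hmem : Nat.count (b · = true) (sInf {j | Nat.count (b · = true) j = u}) = u :=
    Nat.sInf_mem hu
  omega

lemma Uminus_monotone {b : ℕ → Bool} (hb : {i | b i = true}.Infinite) : Monotone (Uminus b) := by
  intro u u' h
  rcases h.eq_or_lt with rfl | hlt
  · rfl
  have hu := exists_count_true_eq hb u
  rw [Uminus_eq_count_false b hu]
  exact count_false_le_Uminus hb ((Nat.sInf_mem hu).trans_lt hlt)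

lemma le_count_true_of_forall_lt {n J : ℕ} (hforce : ∀ j < n, b j = true)
    (hfalse : 1 ≤ Nat.count (b · = false) J) : n ≤ Nat.count (b · = true) J := by
  have hnJ : n < J := by
    by_contra! hJn
    have := Nat.count_of_forall (n := J) fun j hj => hforce j (by omega)
    have := count_true_add_count_false b J
    omega
  calc n = Nat.count (b · = true) n := (Nat.count_of_forall hforce).symm
    _ ≤ Nat.count (b · = true) J := Nat.count_monotone _ hnJ.le

end Coins

section Walk

variable (a : ℤ → ℕ → Bool)

def visits (x : ℤ) (t : ℕ) : ℕ := Nat.count (fun s => walk a s = x) t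

def rightSteps (x : ℤ) (t : ℕ) : ℕ :=
  Nat.count (fun s => walk a s = x ∧ walk a (s + 1) = x + 1) t

def leftSteps (x : ℤ) (t : ℕ) : ℕ :=
  Nat.count (fun s => walk a s = x ∧ walk a (s + 1) = x - 1) t

lemma visits_succ (x : ℤ) (t : ℕ) :
    visits a x (t + 1) = visits a x t + if walk a t = x then 1 else 0 :=
  Nat.count_succ _ _

lemma countP_walkHist (x : ℤ) (t : ℕ) :
    (walkHist a t).countP (fun y => decide (y = x)) = visits a x (t + 1) := by
  induction t with
  | zero =>
    rw [visits, Nat.count_one]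
    by_cases h : (0 : ℤ) = x <;> simp [walkHist, walk, h]
  | succ t ih =>
    rw [show walkHist a (t + 1) = walk a (t + 1) :: walkHist a t from rfl, List.countP_cons, ih,
      visits_succ a x (t + 1)]
    simp

lemma walk_succ (t : ℕ) :
    walk a (t + 1) = walk a t + if a (walk a t) (visits a (walk a t) t) then 1 else -1 := by
  change walk a t + (if a (walk a t)
    ((walkHist a t).countP (fun y => decide (y = walk a t)) - 1) then 1 else -1) = _
  rw [countP_walkHist, visits_succ, if_pos rfl, Nat.add_sub_cancel]

lemma walk_succ_eq_add_one_iff (t : ℕ) :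
    walk a (t + 1) = walk a t + 1 ↔ a (walk a t) (visits a (walk a t) t) = true := by
  rw [walk_succ]; split <;> simp_all

lemma walk_succ_eq_sub_one_iff (t : ℕ) :
    walk a (t + 1) = walk a t - 1 ↔ a (walk a t) (visits a (walk a t) t) = false := by
  rw [walk_succ]; split <;> simp_all <;> omega

lemma walk_succ_cases (t : ℕ) : walk a (t + 1) = walk a t + 1 ∨ walk a (t + 1) = walk a t - 1 := by
  rw [walk_succ]; split <;> simp [sub_eq_add_neg]

lemma walk_le (t : ℕ) : walk a t ≤ t := by
  induction t with
  | zero => rfl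
  | succ t ih => rcases walk_succ_cases a t with h | h <;> push_cast <;> omega

lemma count_visit_coin (q : Bool) (x : ℤ) (t : ℕ) :
    Nat.count (fun s => walk a s = x ∧ a x (visits a x s) = q) t
      = Nat.count (a x · = q) (visits a x t) := by
  induction t with
  | zero => rfl
  | succ t ih =>
    by_cases hx : walk a t = x
    · rw [Nat.count_succ, ih, visits_succ, if_pos hx, Nat.count_succ]
      simp [hx]
    · rw [Nat.count_succ, ih, visits_succ, if_neg hx]
      simp [hx]

lemma rightSteps_eq_count_true (x : ℤ) (t : ℕ) :
    rightSteps a x t = Nat.count (a x · = true) (visits a x t) := by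
  have step (s : ℕ) : (walk a s = x ∧ walk a (s + 1) = x + 1)
      ↔ (walk a s = x ∧ a x (visits a x s) = true) := by
    constructor <;> rintro ⟨rfl, h⟩ <;> exact ⟨rfl, by simpa [walk_succ_eq_add_one_iff] using h⟩
  simp only [rightSteps, step, count_visit_coin]

lemma leftSteps_eq_count_false (x : ℤ) (t : ℕ) :
    leftSteps a x t = Nat.count (a x · = false) (visits a x t) := by
  have step (s : ℕ) : (walk a s = x ∧ walk a (s + 1) = x - 1)
      ↔ (walk a s = x ∧ a x (visits a x s) = false) := by
    constructor <;> rintro ⟨rfl, h⟩ <;> exact ⟨rfl, by simpa [walk_succ_eq_sub_one_iff] using h⟩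
  simp only [leftSteps, step, count_visit_coin]

/-- Crossings of the edge `{m, m + 1}`: right crossings and left crossings alternate. -/
lemma rightSteps_add_ite (m : ℤ) (t : ℕ) :
    rightSteps a m t + (if m + 1 ≤ 0 then 1 else 0)
      = leftSteps a (m + 1) t + if m + 1 ≤ walk a t then 1 else 0 := by
  induction t with
  | zero => rw [show walk a 0 = 0 from rfl]; rfl
  | succ t ih =>
    simp only [rightSteps, leftSteps, Nat.count_succ] at ih ⊢
    rcases walk_succ_cases a t with h | h <;> rw [h] <;> split_ifs at ih ⊢ <;> omega

lemma rightSteps_eq_of_forall_lt {x : ℤ} {t₀ : ℕ} (h : ∀ s ≥ t₀, x < walk a s) {t : ℕ}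
    (ht : t₀ ≤ t) : rightSteps a x t = rightSteps a x t₀ := by
  induction t, ht using Nat.le_induction with
  | base => rfl
  | succ t ht ih =>
    have hne : walk a t ≠ x := (h t ht).ne'
    simpa [rightSteps, Nat.count_succ, hne] using ih

end Walk

section Transience

variable (a : ℤ → ℕ → Bool)

lemma walk_nonneg_of_forall_ne (h : ∀ t, walk a t ≠ -1) (t : ℕ) : 0 ≤ walk a t := by
  induction t with
  | zero => exact le_rfl
  | succ t ih =>
    have := h (t + 1)
    rcases walk_succ_cases a t with hs | hs <;> omega

/-- Each `false` coin at `x` sends one visit of `x` on to `x - 1`. -/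
lemma infinite_visits_sub_one {x : ℤ} (hx : {i | a x i = false}.Infinite)
    (hvis : {t | walk a t = x}.Infinite) : {t | walk a t = x - 1}.Infinite := by
  have hinj : Function.Injective fun j => Nat.nth (fun t => walk a t = x) j + 1 :=
    (add_left_injective 1).comp (Nat.nth_strictMono hvis).injective
  refine (hx.image hinj.injOn).mono ?_
  rintro _ ⟨j, hj, rfl⟩
  have hwalk : walk a (Nat.nth (fun t => walk a t = x) j) = x := Nat.nth_mem_of_infinite hvis j
  have hvisits : visits a x (Nat.nth (fun t => walk a t = x) j) = j :=
    Nat.count_nth_of_infinite hvis j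
  have hstep := (walk_succ_eq_sub_one_iff a (Nat.nth (fun t => walk a t = x) j)).2
    (by rw [hwalk, hvisits]; exact hj)
  show walk a (Nat.nth (fun t => walk a t = x) j + 1) = x - 1
  rw [hstep, hwalk]

lemma exists_infinite_visits_of_not_tendsto (hnonneg : ∀ t, 0 ≤ walk a t)
    (h : ¬ Tendsto (walk a) atTop atTop) : ∃ x, 0 ≤ x ∧ {t | walk a t = x}.Infinite := by
  simp only [tendsto_atTop, not_forall, not_eventually, not_le] at h
  obtain ⟨b, hb⟩ := h
  have hlow : {t | walk a t < b}.Infinite := Nat.frequently_atTop_iff_infinite.1 hb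
  by_contra! hfin
  refine hlow (((Set.finite_Ico 0 b).biUnion fun x hx => hfin x hx.1).subset fun t ht => ?_)
  exact Set.mem_biUnion (x := walk a t) ⟨hnonneg t, ht⟩ rfl

lemma tendsto_walk_of_forall_ne (hfalse : ∀ x, {i | a x i = false}.Infinite)
    (h : ∀ t, walk a t ≠ -1) : Tendsto (walk a) atTop atTop := by
  by_contra hT
  obtain ⟨x, hx0, hx⟩ :=
    exists_infinite_visits_of_not_tendsto a (walk_nonneg_of_forall_ne a h) hT
  have hneg : {t | walk a t = -1}.Infinite :=
    Int.leInductionDown (motive := fun y _ => {t | walk a t = y}.Infinite) hx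
      (fun y _ hy => infinite_visits_sub_one a (hfalse y) hy) (-1) (by omega)
  obtain ⟨t, ht⟩ := hneg.nonempty
  exact h t ht

end Transience

noncomputable def crossBound (c : ℕ → ℕ → Bool) : ℕ → ℕ → ℕ
  | _, 0 => 1
  | m, k + 1 => Uminus (c m) (crossBound c (m + 1) k) + 1

lemma crossBound_le_of_supersolution {c : ℕ → ℕ → Bool} (hc : ∀ m, {i | c m i = true}.Infinite)
    {v : ℕ → ℕ} (hpos : ∀ m, 1 ≤ v m) (hsuper : ∀ m, Uminus (c m) (v (m + 1)) + 1 ≤ v m)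
    (m k : ℕ) : crossBound c m k ≤ v m := by
  induction k generalizing m with
  | zero => exact hpos m
  | succ k ih =>
    exact (Nat.add_le_add_right (Uminus_monotone (hc m) (ih (m + 1))) 1).trans (hsuper m)

def positiveColumns (a : ℤ → ℕ → Bool) : ℕ → ℕ → Bool := fun m => a (m + 1)

section Crossings

variable (a : ℤ → ℕ → Bool)

lemma rightSteps_add_one_le_crossBound (htrue : ∀ m : ℕ, {i | a (m + 1) i = true}.Infinite)
    {T : ℕ} (hT : walk a T ≤ 0) (m k : ℕ) (hmk : T ≤ m + k) :
    rightSteps a m T + 1 ≤ crossBound (positiveColumns a) m k := by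
  induction k generalizing m with
  | zero =>
    have hzero : rightSteps a m T = 0 := Nat.count_of_forall_not fun s hs h => by
      have := walk_le a s
      omega
    simp [hzero, crossBound]
  | succ k ih =>
    have hnext := ih (m + 1) (by omega)
    have hbal := rightSteps_add_ite a m T
    rw [if_neg (by omega), if_neg (by omega)] at hbal
    push_cast at hnext
    rw [rightSteps_eq_count_true] at hnext
    have hle := count_false_le_Uminus (htrue m) (Nat.lt_of_succ_le hnext)
    rw [← leftSteps_eq_count_false] at hle
    simp only [crossBound, positiveColumns]
    omega

lemma walk_ne_neg_one_of_crossBound_le (htrue : ∀ m : ℕ, {i | a (m + 1) i = true}.Infinite)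
    {n : ℕ} (hbd : ∀ k, crossBound (positiveColumns a) 0 k ≤ n)
    (hforce : ∀ j < n, a 0 j = true) (t : ℕ) : walk a t ≠ -1 := by
  intro ht
  have hright :=
    (rightSteps_add_one_le_crossBound a htrue (T := t) (by omega) 0 t (by omega)).trans (hbd t)
  have hleft : 1 ≤ leftSteps a 0 t := by
    have := rightSteps_add_ite a (-1) t
    rw [if_pos (by norm_num), if_neg (by omega), neg_add_cancel] at this
    omega
  rw [Nat.cast_zero, rightSteps_eq_count_true] at hright
  rw [leftSteps_eq_count_false] at hleft
  have := le_count_true_of_forall_lt (a 0) hforce hleft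
  omega

lemma exists_crossBound_le_of_tendsto (htrue : ∀ m : ℕ, {i | a (m + 1) i = true}.Infinite)
    (h : Tendsto (walk a) atTop atTop) : ∃ n, ∀ k, crossBound (positiveColumns a) 0 k ≤ n := by
  choose τ hτ using fun x : ℤ => eventually_atTop.1 (h.eventually_gt_atTop x)
  set v : ℕ → ℕ := fun m => rightSteps a m (τ (m + 1))
  have hfrozen (m : ℕ) {t : ℕ} (ht : τ (m + 1) ≤ t) : rightSteps a m t = v m :=
    rightSteps_eq_of_forall_lt a (fun s hs => (lt_add_one _).trans (hτ _ s hs)) ht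
  have hbal (m : ℕ) {t : ℕ} (ht : τ (m + 1) ≤ t) :
      rightSteps a m t = leftSteps a (m + 1) t + 1 := by
    have := rightSteps_add_ite a m t
    rw [if_neg (by omega), if_pos (hτ _ t ht).le] at this
    omega
  refine ⟨v 0, fun k => crossBound_le_of_supersolution htrue (fun m => ?_) (fun m => ?_) 0 k⟩
  · show 1 ≤ rightSteps a m (τ (m + 1))
    have := hbal m le_rfl
    omega
  · set t : ℕ := max (τ (m + 1)) (τ (m + 1 + 1))
    have hm := hfrozen m (t := t) (le_max_left _ _)
    have hm1 : rightSteps a (m + 1) t = v (m + 1) := by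
      simpa using hfrozen (m + 1) (t := t) (by push_cast; exact le_max_right _ _)
    have hb := hbal m (t := t) (le_max_left _ _)
    rw [rightSteps_eq_count_true] at hm1
    rw [leftSteps_eq_count_false] at hb
    have := Uminus_le_count_false (a (m + 1)) hm1
    show Uminus (a (m + 1)) (v (m + 1)) + 1 ≤ v m
    omega

end Crossings

section Measurability

lemma measurable_sInf_setOf {α : Type*} [MeasurableSpace α] {p : α → ℕ → Prop}
    (hp : ∀ j, Measurable fun x => p x j) : Measurable fun x => sInf {j | p x j} := by
  refine measurable_to_countable' fun v => ?_
  have hpre : (fun x => sInf {j | p x j}) ⁻¹' {v}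
      = {x | (p x v ∧ ∀ i < v, ¬ p x i) ∨ (v = 0 ∧ ∀ j, ¬ p x j)} := by
    ext x
    simp only [Set.mem_preimage, Set.mem_singleton_iff, Set.mem_ofPred_eq]
    constructor
    · rintro rfl
      by_cases hS : {j | p x j}.Nonempty
      · exact Or.inl ⟨Nat.sInf_mem hS, fun i hi => Nat.notMem_of_lt_sInf hi⟩
      · rw [Set.not_nonempty_iff_eq_empty] at hS
        exact Or.inr ⟨by rw [hS, Nat.sInf_empty], fun j hj => hS.subset hj⟩
    · rintro (⟨hv, hmin⟩ | ⟨rfl, hS⟩)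
      · exact IsLeast.csInf_eq ⟨hv, fun i hi => le_of_not_gt fun hlt => hmin i hlt hi⟩
      · exact Nat.sInf_eq_zero.2 (Or.inr (Set.eq_empty_of_forall_notMem hS))
  rw [hpre]
  exact measurableSet_setOfPred.2 (by fun_prop)

lemma measurable_count_eq (q : Bool) (j : ℕ) :
    Measurable fun b : ℕ → Bool => Nat.count (b · = q) j := by
  induction j with
  | zero => simp only [Nat.count_zero]; exact measurable_const
  | succ j ih =>
    simp only [Nat.count_succ]
    exact ih.add ((measurable_from_top (f := fun y : Bool => if y = q then 1 else 0)).comp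
      (measurable_pi_apply j))

lemma measurable_Uminus : Measurable fun p : (ℕ → Bool) × ℕ => Uminus p.1 p.2 := by
  refine measurable_from_prod_countable_left fun u => ?_
  simp only [Uminus_eq_ite]
  split_ifs
  · exact measurable_const
  · refine (measurable_sInf_setOf fun j => ?_).sub_const u
    exact measurableSet_setOfPred.1 (measurable_count_eq true j (measurableSet_singleton u))

lemma measurable_crossBound (m k : ℕ) : Measurable fun c : ℕ → ℕ → Bool => crossBound c m k := by
  induction k generalizing m with
  | zero => exact measurable_const
  | succ k ih =>
    exact (measurable_Uminus.comp ((measurable_pi_apply m).prodMk (ih (m + 1)))).add_const 1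

lemma measurableSet_crossBound_le (n : ℕ) :
    MeasurableSet {c : ℕ → ℕ → Bool | ∀ k, crossBound c 0 k ≤ n} :=
  measurableSet_setOfPred.2 <| Measurable.forall fun k =>
    measurableSet_setOfPred.1 (measurable_crossBound 0 k measurableSet_Iic)

lemma measurable_positiveColumns : Measurable positiveColumns :=
  measurable_pi_lambda _ fun _ => measurable_pi_apply _

lemma measurable_arrows : Measurable fun p : CookieSpace × CookieSpace => arrows p.1 p.2 := by
  refine measurable_pi_lambda _ fun x => measurable_pi_lambda _ fun n => measurable_to_bool ?_
  simp only [arrows, Set.preimage, Set.mem_singleton_iff, decide_eq_true_eq]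
  exact measurableSet_lt (by fun_prop) (by fun_prop)

end Measurability

section Independence

def cookieBox (S : Finset (ℤ × ℕ)) (B : ℤ × ℕ → Set ℝ) : Set CookieSpace :=
  {u | ∀ p ∈ S, u p.1 p.2 ∈ B p}

def restrictCompl (F : Finset (ℤ × ℕ)) (u : CookieSpace) : {p : ℤ × ℕ // p ∉ F} → ℝ :=
  fun q => u q.1.1 q.1.2

lemma measurable_restrictCompl (F : Finset (ℤ × ℕ)) : Measurable (restrictCompl F) :=
  measurable_pi_lambda _ fun _ => (measurable_pi_apply _).comp (measurable_pi_apply _)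

lemma measure_cookieBox_inter {PU : Measure CookieSpace} (hPU : IsUniformProduct PU)
    {S F : Finset (ℤ × ℕ)} (hSF : Disjoint S F) {B W : ℤ × ℕ → Set ℝ}
    (hB : ∀ p, MeasurableSet (B p)) (hW : ∀ p, MeasurableSet (W p)) :
    PU (cookieBox S B ∩ cookieBox F W)
      = (∏ p ∈ F, volume (W p ∩ Icc (0 : ℝ) 1)) * PU (cookieBox S B) := by
  classical
  have hnotF {p} (hp : p ∈ S) : p ∉ F := Finset.disjoint_left.1 hSF hp
  have hunion : cookieBox S B ∩ cookieBox F W = cookieBox (S ∪ F) (F.piecewise W B) := by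
    ext u
    simp only [cookieBox, Set.mem_inter_iff, Set.mem_ofPred_eq, Finset.mem_union]
    constructor
    · rintro ⟨hS, hF⟩ p (hp | hp)
      · rw [Finset.piecewise_eq_of_notMem _ _ _ (hnotF hp)]; exact hS p hp
      · rw [Finset.piecewise_eq_of_mem _ _ _ hp]; exact hF p hp
    · intro h
      refine ⟨fun p hp => ?_, fun p hp => ?_⟩
      · simpa [Finset.piecewise_eq_of_notMem _ _ _ (hnotF hp)] using h p (Or.inl hp)
      · simpa [Finset.piecewise_eq_of_mem _ _ _ hp] using h p (Or.inr hp)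
  have hpw : ∀ p, MeasurableSet (F.piecewise W B p) := fun p => by
    by_cases hp : p ∈ F <;> simp [hp, hW, hB]
  rw [hunion, cookieBox, hPU.2 _ _ hpw, Finset.prod_union hSF, cookieBox, hPU.2 _ _ hB, mul_comm]
  congr 1
  · exact Finset.prod_congr rfl fun p hp => by rw [Finset.piecewise_eq_of_mem _ _ _ hp]
  · exact Finset.prod_congr rfl fun p hp => by rw [Finset.piecewise_eq_of_notMem _ _ _ (hnotF hp)]

lemma restrictCompl_preimage_pi (F : Finset (ℤ × ℕ)) (s : Finset {p : ℤ × ℕ // p ∉ F})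
    (t : {p : ℤ × ℕ // p ∉ F} → Set ℝ) :
    restrictCompl F ⁻¹' (s : Set _).pi t
      = cookieBox (s.map (Function.Embedding.subtype _))
          (fun p => if hp : p ∈ F then univ else t ⟨p, hp⟩) := by
  ext u
  simp only [cookieBox, restrictCompl, Set.mem_preimage, Set.mem_pi, Finset.mem_coe,
    Set.mem_ofPred_eq, Finset.forall_mem_map, Function.Embedding.coe_subtype]
  exact forall₂_congr fun q _ => by simp [q.2]

lemma measure_restrictCompl_preimage_inter_cookieBox {PU : Measure CookieSpace}
    (hPU : IsUniformProduct PU) (F : Finset (ℤ × ℕ)) {W : ℤ × ℕ → Set ℝ}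
    (hW : ∀ p, MeasurableSet (W p)) {A : Set ({p : ℤ × ℕ // p ∉ F} → ℝ)} (hA : MeasurableSet A) :
    PU (restrictCompl F ⁻¹' A ∩ cookieBox F W)
      = (∏ p ∈ F, volume (W p ∩ Icc (0 : ℝ) 1)) * PU (restrictCompl F ⁻¹' A) := by
  have := hPU.1
  have hρ := measurable_restrictCompl F
  have hmap : (PU.restrict (cookieBox F W)).map (restrictCompl F)
      = (∏ p ∈ F, volume (W p ∩ Icc (0 : ℝ) 1)) • PU.map (restrictCompl F) := by
    refine ext_of_generate_finite _ generateFrom_squareCylinders.symm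
      (isPiSystem_squareCylinders (fun _ => MeasurableSpace.isPiSystem_measurableSet)
        fun _ => by simp) ?_ ?_
    · rintro _ ⟨s, t, ht, rfl⟩
      rw [Set.mem_univ_pi] at ht
      have hst : MeasurableSet ((s : Set _).pi t) :=
        MeasurableSet.pi s.countable_toSet fun q _ => ht q
      rw [Measure.map_apply hρ hst, Measure.restrict_apply (hρ hst), Measure.smul_apply,
        Measure.map_apply hρ hst, smul_eq_mul, restrictCompl_preimage_pi]
      refine measure_cookieBox_inter hPU ?_ (fun p => ?_) hW
      · exact Finset.disjoint_left.2 fun p hp => by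
          obtain ⟨q, -, rfl⟩ := Finset.mem_map.1 hp
          exact q.2
      · by_cases hp : p ∈ F
        · simp [hp]
        · simpa [hp] using ht ⟨p, hp⟩
    · rw [Measure.map_apply hρ .univ, Measure.smul_apply, Measure.map_apply hρ .univ,
        Set.preimage_univ, Measure.restrict_apply_univ, measure_univ, smul_eq_mul, mul_one]
      exact hPU.2 F W hW
  have := congrArg (· A) hmap
  rwa [Measure.map_apply hρ hA, Measure.restrict_apply (hρ hA), Measure.smul_apply,
    Measure.map_apply hρ hA, smul_eq_mul] at this

end Independence

section Annealed

lemma annealed_apply (μ PU : Measure CookieSpace) [SFinite PU] {E : Set ArrowSpace}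
    (hE : MeasurableSet E) : annealed μ PU E = ∫⁻ ω, PU {u | arrows ω u ∈ E} ∂μ := by
  rw [annealed, Measure.map_apply measurable_arrows hE, Measure.prod_apply (measurable_arrows hE)]
  rfl

def siteZeroSlots (n : ℕ) : Finset (ℤ × ℕ) := (Finset.range n).image fun j => (0, j)

lemma succ_notMem_siteZeroSlots (n m j : ℕ) : ((m : ℤ) + 1, j) ∉ siteZeroSlots n := by
  simp only [siteZeroSlots, Finset.mem_image, Prod.mk.injEq, not_exists, not_and]
  omega

/-- The columns at sites `1, 2, …` of `arrows ω u`, read off the coordinates of `u` outside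
`siteZeroSlots n`. -/
noncomputable def positiveArrows (n : ℕ) (ω : CookieSpace)
    (v : {p : ℤ × ℕ // p ∉ siteZeroSlots n} → ℝ) : ℕ → ℕ → Bool :=
  fun m j => decide (v ⟨((m : ℤ) + 1, j), succ_notMem_siteZeroSlots n m j⟩ < ω (m + 1) j)

lemma measurable_positiveArrows (n : ℕ) (ω : CookieSpace) : Measurable (positiveArrows n ω) := by
  refine measurable_pi_lambda _ fun m => measurable_pi_lambda _ fun j => measurable_to_bool ?_
  simp only [positiveArrows, Set.preimage, Set.mem_singleton_iff, decide_eq_true_eq]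
  exact measurableSet_lt (measurable_pi_apply _) measurable_const

/-- Forcing the first `n` arrows at the origin to point right costs a positive factor, since
those arrows are independent of the columns at positive sites. -/
lemma annealed_inter_forced_pos {μ PU : Measure CookieSpace} (hell : EllipticAE μ)
    (hPU : IsUniformProduct PU) {D : Set (ℕ → ℕ → Bool)} (hD : MeasurableSet D) (n : ℕ)
    (hpos : 0 < annealed μ PU (positiveColumns ⁻¹' D)) :
    0 < annealed μ PU (positiveColumns ⁻¹' D ∩ {a | ∀ j < n, a 0 j = true}) := by
  have := hPU.1
  have hE : MeasurableSet (positiveColumns ⁻¹' D) := measurable_positiveColumns hD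
  have hET : MeasurableSet (positiveColumns ⁻¹' D ∩ {a | ∀ j < n, a 0 j = true}) :=
    hE.inter (measurableSet_setOfPred.2 (by fun_prop))
  have hslice (ω : CookieSpace) :
      PU {u | arrows ω u ∈ positiveColumns ⁻¹' D ∩ {a | ∀ j < n, a 0 j = true}}
        = (∏ p ∈ siteZeroSlots n, volume (Iio (ω p.1 p.2) ∩ Icc (0 : ℝ) 1))
          * PU {u | arrows ω u ∈ positiveColumns ⁻¹' D} := by
    have hcyl : {u | arrows ω u ∈ positiveColumns ⁻¹' D ∩ {a | ∀ j < n, a 0 j = true}}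
        = restrictCompl (siteZeroSlots n) ⁻¹' (positiveArrows n ω ⁻¹' D)
          ∩ cookieBox (siteZeroSlots n) (fun p => Iio (ω p.1 p.2)) := by
      ext u
      show (_ ∧ _) ↔ (_ ∧ _)
      refine and_congr Iff.rfl ?_
      simp [cookieBox, siteZeroSlots, arrows]
    rw [hcyl, measure_restrictCompl_preimage_inter_cookieBox hPU _ (fun _ => measurableSet_Iio)
      (measurable_positiveArrows n ω hD)]
    rfl
  have hmeas : Measurable fun ω =>
      PU {u | arrows ω u ∈ positiveColumns ⁻¹' D ∩ {a | ∀ j < n, a 0 j = true}} :=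
    measurable_measure_prodMk_left (measurable_arrows hET)
  rw [annealed_apply _ _ hE, pos_iff_ne_zero] at hpos
  rw [annealed_apply _ _ hET, pos_iff_ne_zero, Ne, lintegral_eq_zero_iff' hmeas.aemeasurable]
  refine fun hzero => hpos ((lintegral_congr_ae ?_).trans lintegral_zero)
  filter_upwards [hzero, hell] with ω hω hellω
  rw [Pi.zero_apply, hslice] at hω
  refine (mul_eq_zero.1 hω).resolve_left (Finset.prod_ne_zero_iff.2 fun p _ => ?_)
  have hlt := hellω p.1 p.2
  refine ((Measure.measure_Ioo_pos volume).2 hlt.1).ne' ∘ measure_mono_null fun x hx => ?_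
  exact ⟨hx.2, hx.1.le, hx.2.le.trans hlt.2.le⟩

end Annealed

theorem stmt_14_general (μ PU : Measure CookieSpace)
    (hell : EllipticAE μ) (hPU : IsUniformProduct PU)
    (hnd : ∀ᵐ a ∂(annealed μ PU), NonDegEnv a) :
    0 < annealed μ PU {a | ∀ t, walk a t ≠ -1} ↔
      0 < annealed μ PU {a | Filter.Tendsto (walk a) Filter.atTop Filter.atTop} := by
  constructor
  · refine fun h => h.trans_le (measure_mono_ae (hnd.mono fun a ha hnever => ?_))
    exact tendsto_walk_of_forall_ne a (fun x => (ha x).1) hnever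
  · intro h
    obtain ⟨n, hn⟩ : ∃ n, 0 < annealed μ PU
        (positiveColumns ⁻¹' {c | ∀ k, crossBound c 0 k ≤ n}) := by
      by_contra! h0
      refine h.ne' (measure_mono_null_ae (hnd.mono fun a ha htend => ?_)
        (measure_iUnion_null fun n => nonpos_iff_eq_zero.1 (h0 n)))
      exact Set.mem_iUnion.2 (exists_crossBound_le_of_tendsto a (fun m => (ha _).2) htend)
    have hforced := annealed_inter_forced_pos hell hPU (measurableSet_crossBound_le n) n hn
    refine hforced.trans_le (measure_mono_ae ?_)
    filter_upwards [hnd] with a ha ⟨hbd, hforce⟩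
    exact walk_ne_neg_one_of_crossBound_le a (fun m => (ha _).2) hbd hforce

/-- for elliptic non-degenerate stationary ergodic `μ`,
`ℙ₀(T₋₁ = ∞) > 0` iff `ℙ₀(A⁺) > 0`. -/
theorem stmt_14 (μ PU : Measure CookieSpace) [IsProbabilityMeasure μ]
    (herg : Ergodic shiftC μ) (hell : EllipticAE μ) (hPU : IsUniformProduct PU)
    (hnd : ∀ᵐ a ∂(annealed μ PU), NonDegEnv a) :
    0 < annealed μ PU {a | ∀ t, walk a t ≠ -1} ↔
      0 < annealed μ PU {a | Filter.Tendsto (walk a) Filter.atTop Filter.atTop} :=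
  stmt_14_general μ PU hell hPU hnd
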